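/- arXiv:1811.03057 — 2 statements merged into one kernel-verified Lean document; each statement's English description precedes it below -/
import Mathlib

section
/- Let G be a finite p-group with |Z(G)| = p. Then the quotient Z₂(G)/Z(G) is elementary abelian, where Z₂(G) is the second center of G (i.e., Z₂(G)/Z(G) = Z(G/Z(G))). -/
/-! If `a` is central modulo `Z(G)`, then `c = a⁻¹ (g a g⁻¹)` is central, so
`g aⁿ g⁻¹ = (a c)ⁿ = aⁿ cⁿ`. Hence `aⁿ ∈ Z(G)` whenever `n` kills `Z(G)`, e.g. `n = |Z(G)|`. -/

namespace Subgroup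

variable {G : Type*} [Group G]

theorem inv_mul_conj_mem_center_of_mk_mem_center {a : G}
    (ha : (a : G ⧸ center G) ∈ center (G ⧸ center G)) (g : G) :
    a⁻¹ * (g * a * g⁻¹) ∈ center G := by
  rw [← QuotientGroup.eq, QuotientGroup.mk_mul, QuotientGroup.mk_mul, QuotientGroup.mk_inv,
    mem_center_iff.mp ha, mul_inv_cancel_right]

theorem pow_mem_center_of_mk_mem_center {n : ℕ} (hn : ∀ z ∈ center G, z ^ n = 1) {a : G}
    (ha : (a : G ⧸ center G) ∈ center (G ⧸ center G)) : a ^ n ∈ center G := by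
  rw [mem_center_iff]
  intro g
  set c := a⁻¹ * (g * a * g⁻¹)
  have hc : c ∈ center G := inv_mul_conj_mem_center_of_mk_mem_center ha g
  have hconj : g * a ^ n * g⁻¹ = a ^ n :=
    calc g * a ^ n * g⁻¹ = (g * a * g⁻¹) ^ n := (conj_pow).symm
      _ = (a * c) ^ n := by rw [mul_inv_cancel_left]
      _ = a ^ n * c ^ n := Commute.mul_pow (mem_center_iff.mp hc a) n
      _ = a ^ n := by rw [hn c hc, mul_one]
  exact mul_inv_eq_iff_eq_mul.mp hconj

theorem pow_eq_one_of_mem_center_quotient_center {n : ℕ} (hn : ∀ z ∈ center G, z ^ n = 1)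
    (x : center (G ⧸ center G)) : x ^ n = 1 := by
  obtain ⟨a, ha⟩ := QuotientGroup.mk_surjective (x : G ⧸ center G)
  have hx : (a : G ⧸ center G) ∈ center (G ⧸ center G) := ha ▸ x.2
  ext
  rw [SubmonoidClass.coe_pow, ← ha, ← QuotientGroup.mk_pow, OneMemClass.coe_one,
    QuotientGroup.eq_one_iff]
  exact pow_mem_center_of_mk_mem_center hn hx

end Subgroup

theorem stmt10_general (p : ℕ) (G : Type) [Group G] (hZ : Nat.card (Subgroup.center G) = p) :
    (∀ a b : Subgroup.center (G ⧸ Subgroup.center G), a * b = b * a) ∧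
      ∀ a : Subgroup.center (G ⧸ Subgroup.center G), a ^ p = 1 := by
  refine ⟨mul_comm', Subgroup.pow_eq_one_of_mem_center_quotient_center fun z hz => ?_⟩
  have hpow : (⟨z, hz⟩ : Subgroup.center G) ^ p = 1 := hZ ▸ pow_card_eq_one'
  exact congrArg Subtype.val hpow

theorem stmt10 (p : ℕ) [Fact p.Prime] (G : Type) [Group G] [Fintype G]
    (hG : IsPGroup p G) (hZ : Nat.card (Subgroup.center G) = p) :
    (∀ a b : Subgroup.center (G ⧸ Subgroup.center G), a * b = b * a) ∧
      ∀ a : Subgroup.center (G ⧸ Subgroup.center G), a ^ p = 1 :=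
  stmt10_general p G hZ
end

section
/- Let G be a semi-extraspecial p-group of order p⁶, i.e., G' = Z(G), |G'| = p², G/G' is elementary abelian, and every nonlinear irreducible character of G has degree p². Then p² ∉ cod(G). -/
open CategoryTheory

/-- The degree of (the character of) a finite-dimensional complex representation. -/
noncomputable def charDeg {G : Type} [Group G] (V : FDRep ℂ G) : ℕ :=
  Module.finrank ℂ V

/-- The kernel of (the character of) a representation. -/
noncomputable def charKer {G : Type} [Group G] (V : FDRep ℂ G) : Subgroup G :=
  MonoidHom.ker (Representation.asGroupHom V.ρ)

/-- The codegree of an irreducible character: `|G : ker χ| / χ(1)`. -/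
noncomputable def cod {G : Type} [Group G] (V : FDRep ℂ G) : ℕ :=
  (charKer V).index / charDeg V

/-- The set of codegrees of irreducible characters of `G`. -/
noncomputable def codSet (G : Type) [Group G] : Set ℕ :=
  {n | ∃ V : FDRep ℂ G, Simple V ∧ cod V = n}

/-!
A linear character of `G` factors through `G/G'`, which has exponent `p`, so its codegree is at
most `p`. A character `χ` of degree `p²` with codegree `p²` would have `|G : ker χ| = p⁴ = χ(1)²`.
Then `∑_{g ∈ ker χ} |χ(g)|² = |ker χ| χ(1)² = |G|` exhausts the first orthogonality relation, so
`χ` vanishes off `ker χ`; but then `∑_g χ(g) = |ker χ| χ(1)` is nonzero, while it is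
`|G|⟨χ, 1⟩ = 0` for nontrivial irreducible `χ`.
-/

/- `X ^ m - 1` is squarefree, so `u` is diagonalizable; on its `μ`-eigenspace `u⁻¹` acts by
`μ⁻¹ = conj μ`, as `μ` is a root of unity. -/
open Polynomial in
theorem Module.End.trace_inv_eq_conj_trace {V : Type*} [AddCommGroup V] [Module ℂ V]
    [FiniteDimensional ℂ V] (u : (Module.End ℂ V)ˣ) {m : ℕ} (hm : m ≠ 0) (hu : u ^ m = 1) :
    LinearMap.trace ℂ V ↑u⁻¹ = starRingEnd ℂ (LinearMap.trace ℂ V u) := by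
  set f : Module.End ℂ V := ↑u
  have hfm : f ^ m = 1 := by rw [← Units.val_pow_eq_pow_val, hu, Units.val_one]
  have hss : f.IsSemisimple :=
    f.isSemisimple_of_squarefree_aeval_eq_zero
      ((separable_X_pow_sub_C (1 : ℂ) (by exact_mod_cast hm) one_ne_zero).squarefree)
      (by simp [hfm])
  have hint : DirectSum.IsInternal f.eigenspace :=
    DirectSum.isInternal_submodule_of_iSupIndep_of_iSup_eq_top
      f.eigenspaces_iSupIndep hss.iSup_eigenspace_eq_top
  have hfin : {μ | f.eigenspace μ ≠ ⊥}.Finite :=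
    WellFoundedGT.finite_ne_bot_of_iSupIndep f.eigenspaces_iSupIndep
  have hcomm : Commute f ↑u⁻¹ := Units.commute_coe_inv u
  have hmf : ∀ μ, Set.MapsTo f (f.eigenspace μ) (f.eigenspace μ) := fun μ =>
    f.mapsTo_genEigenspace_of_comm (Commute.refl f) μ 1
  have hmg : ∀ μ, Set.MapsTo (↑u⁻¹ : Module.End ℂ V) (f.eigenspace μ) (f.eigenspace μ) :=
    fun μ => f.mapsTo_genEigenspace_of_comm hcomm μ 1
  rw [LinearMap.trace_eq_sum_trace_restrict' hint hfin hmg,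
    LinearMap.trace_eq_sum_trace_restrict' hint hfin hmf, map_sum]
  refine Finset.sum_congr rfl fun μ hμ => ?_
  obtain ⟨x, hx, hx0⟩ := Submodule.exists_mem_ne_zero_of_ne_bot (hfin.mem_toFinset.mp hμ)
  have hμm : μ ^ m = 1 := by
    have h := Module.End.HasEigenvector.pow_apply ⟨hx, hx0⟩ m
    rw [hfm, Module.End.one_apply] at h
    exact smul_left_injective ℂ hx0 (by simpa using h.symm)
  have hf_restrict : f.restrict (hmf μ) = μ • LinearMap.id := by
    ext ⟨y, hy⟩
    exact Module.End.mem_eigenspace_iff.mp hy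
  have hu_restrict : (↑u⁻¹ : Module.End ℂ V).restrict (hmg μ) = μ⁻¹ • LinearMap.id := by
    ext ⟨y, hy⟩
    have hfy : f y = μ • y := Module.End.mem_eigenspace_iff.mp hy
    have hμ0 : μ ≠ 0 := by rintro rfl; simp [zero_pow hm] at hμm
    change (↑u⁻¹ : Module.End ℂ V) y = μ⁻¹ • y
    rw [eq_inv_smul_iff₀ hμ0, ← map_smul, ← hfy]
    exact LinearMap.congr_fun u.inv_mul y
  rw [hf_restrict, hu_restrict, map_smul, map_smul, smul_eq_mul, smul_eq_mul, map_mul,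
    Complex.inv_eq_conj (Complex.norm_eq_one_of_pow_eq_one hμm hm)]
  simp

section

variable {G : Type} [Group G]

theorem FDRep.char_inv_eq_conj [Finite G] (V : FDRep ℂ G) (g : G) :
    V.character g⁻¹ = starRingEnd ℂ (V.character g) := by
  have h := Module.End.trace_inv_eq_conj_trace (Representation.asGroupHom V.ρ g)
    Nat.card_pos.ne' (by rw [← map_pow, pow_card_eq_one', map_one])
  rwa [← map_inv, Representation.asGroupHom_apply, Representation.asGroupHom_apply] at h

theorem char_eq_charDeg_of_mem_charKer (V : FDRep ℂ G) {g : G} (hg : g ∈ charKer V) :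
    V.character g = charDeg V := by
  have hρ : V.ρ g = 1 := congrArg Units.val (MonoidHom.mem_ker.mp hg)
  rw [FDRep.character, hρ, LinearMap.trace_one, charDeg]

theorem sum_normSq_char [Fintype G] (V : FDRep ℂ G) [Simple V] :
    ∑ g, Complex.normSq (V.character g) = Nat.card G := by
  have h := FDRep.char_orthonormal V V
  rw [if_pos ⟨Iso.refl V⟩, inv_mul_eq_one₀ (by simp)] at h
  apply Complex.ofReal_injective
  push_cast
  rw [h]
  exact Finset.sum_congr rfl fun g _ => by rw [FDRep.char_inv_eq_conj, Complex.mul_conj]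

theorem char_eq_zero_of_notMem_charKer [Fintype G] (V : FDRep ℂ G) [Simple V]
    (h : (charKer V).index = charDeg V ^ 2) {g : G} (hg : g ∉ charKer V) :
    V.character g = 0 := by
  classical
  set K := charKer V
  have hK : ∑ g ∈ Finset.univ.filter (· ∈ K), Complex.normSq (V.character g) = Nat.card G := by
    rw [Finset.sum_congr rfl fun x hx => by
      rw [char_eq_charDeg_of_mem_charKer V (Finset.mem_filter.mp hx).2, Complex.normSq_natCast],
      Finset.sum_const, nsmul_eq_mul, ← K.card_mul_index, h, ← Fintype.card_subtype,
      ← Nat.card_eq_fintype_card]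
    push_cast
    ring
  have hrest : ∑ g ∈ Finset.univ.filter (· ∉ K), Complex.normSq (V.character g) = 0 := by
    linarith [Finset.sum_filter_add_sum_filter_not Finset.univ (· ∈ K)
      (fun g => Complex.normSq (V.character g)), sum_normSq_char V]
  rw [Finset.sum_eq_zero_iff_of_nonneg fun _ _ => Complex.normSq_nonneg _] at hrest
  exact Complex.normSq_eq_zero.mp (hrest g (by simpa using hg))

theorem charDeg_eq_one_of_index_charKer_eq_sq [Fintype G] (V : FDRep ℂ G) [Simple V]
    (h : (charKer V).index = charDeg V ^ 2) : charDeg V = 1 := by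
  classical
  set K := charKer V
  set d := charDeg V
  set c := Module.finrank ℂ (Representation.invariants V.ρ)
  have hG : Nat.card K * d ^ 2 = Nat.card G := h ▸ K.card_mul_index
  have hsum : ∑ g, V.character g = (Nat.card K * d : ℕ) := by
    rw [← Finset.sum_filter_add_sum_filter_not Finset.univ (· ∈ K),
      Finset.sum_congr rfl fun x hx => char_eq_charDeg_of_mem_charKer V (Finset.mem_filter.mp hx).2,
      Finset.sum_eq_zero fun x hx => char_eq_zero_of_notMem_charKer V h (Finset.mem_filter.mp hx).2,
      Finset.sum_const, ← Fintype.card_subtype, ← Nat.card_eq_fintype_card]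
    simp [K, d]
  have hinv : Nat.card K * d = Nat.card K * d ^ 2 * c := by
    have := FDRep.average_char_eq_finrank_invariants V
    rw [hsum, inv_mul_eq_iff_eq_mul₀ (by simp)] at this
    rw [hG]
    exact_mod_cast this
  have hd : d ≠ 0 := by
    rintro hd
    rw [hd, zero_pow two_ne_zero, mul_zero] at hG
    exact Nat.card_pos.ne' hG.symm
  have : d * c = 1 := by
    refine (Nat.eq_of_mul_eq_mul_left (Nat.pos_of_ne_zero hd) ?_).symm
    refine Nat.eq_of_mul_eq_mul_left (Nat.card_pos (α := K)) ?_
    rw [mul_one, hinv]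
    ring
  exact Nat.eq_one_of_mul_eq_one_right this

theorem index_charKer_dvd_of_charDeg_eq_one [Finite G] {n : ℕ}
    (hn : ∀ x : G ⧸ commutator G, x ^ n = 1) (V : FDRep ℂ G) (hV : charDeg V = 1) :
    (charKer V).index ∣ n := by
  obtain ⟨e⟩ : Nonempty (ℂ ≃ₐ[ℂ] Module.End ℂ V) := by
    rw [Module.nonempty_algEquiv_iff_finrank_eq_one, Module.finrank_linearMap, ← charDeg, hV]
  let φ : G →* ℂˣ := (Units.map e.symm.toMonoidHom).comp (Representation.asGroupHom V.ρ)
  have hker : φ.ker = charKer V :=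
    MonoidHom.ker_comp_of_injective _ _ (Units.map_injective e.symm.injective)
  have : Finite φ.range := Finite.of_surjective _ φ.rangeRestrict_surjective
  rw [← hker, Subgroup.index_ker, ← IsCyclic.exponent_eq_card]
  refine Monoid.exponent_dvd_of_forall_pow_eq_one fun ⟨_, g, rfl⟩ => Subtype.ext ?_
  have hg : g ^ n ∈ commutator G := by
    rw [← QuotientGroup.eq_one_iff, QuotientGroup.mk_pow]
    exact hn g
  simpa [← map_pow] using Abelianization.commutator_subset_ker φ hg

end

theorem Nat.eq_add_of_pow_div_pow_eq {p k a b : ℕ} (hp : 1 < p) (h : p ^ k / p ^ a = p ^ b) :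
    k = a + b := by
  rcases lt_or_ge k a with hk | hk
  · rw [Nat.div_eq_of_lt (Nat.pow_lt_pow_right hp hk)] at h
    exact absurd h.symm (pow_pos (by omega) b).ne'
  · rw [Nat.pow_div hk (by omega)] at h
    have := Nat.pow_right_injective hp h
    omega

theorem stmt19_general (p : ℕ) [Fact p.Prime] (G : Type) [Group G] [Fintype G]
    (hcard : Nat.card G = p ^ 6)
    (helem : ∀ x : G ⧸ commutator G, x ^ p = 1)
    (hdeg : ∀ V : FDRep ℂ G, Simple V → 1 < charDeg V → charDeg V = p ^ 2) :
    p ^ 2 ∉ codSet G := by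
  rintro ⟨V, hV, hcod⟩
  have hp : p.Prime := Fact.out
  rw [cod] at hcod
  obtain hd | hd | hd : charDeg V = 0 ∨ charDeg V = 1 ∨ 1 < charDeg V := by omega
  · rw [hd, Nat.div_zero] at hcod
    exact (pow_pos hp.pos 2).ne' hcod.symm
  · rw [hd, Nat.div_one] at hcod
    have := Nat.le_of_dvd hp.pos (hcod ▸ index_charKer_dvd_of_charDeg_eq_one helem V hd)
    nlinarith [hp.two_le]
  · have hd2 := hdeg V hV hd
    obtain ⟨k, -, hk⟩ := (Nat.dvd_prime_pow hp).1 (hcard ▸ (charKer V).index_dvd_card)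
    rw [hd2, hk] at hcod
    have hindex : (charKer V).index = charDeg V ^ 2 := by
      rw [hk, hd2, Nat.eq_add_of_pow_div_pow_eq hp.one_lt hcod, ← pow_mul]
    have := charDeg_eq_one_of_index_charKer_eq_sq V hindex
    omega

theorem stmt19 (p : ℕ) [Fact p.Prime] (G : Type) [Group G] [Fintype G]
    (hG : IsPGroup p G) (hcard : Nat.card G = p ^ 6)
    (hZ : commutator G = Subgroup.center G)
    (hZcard : Nat.card (commutator G) = p ^ 2)
    (helem : ∀ x : G ⧸ commutator G, x ^ p = 1)
    (hdeg : ∀ V : FDRep ℂ G, Simple V → 1 < charDeg V → charDeg V = p ^ 2) :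
    p ^ 2 ∉ codSet G :=
  stmt19_general p G hcard helem hdeg
end
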